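/- The kernel of the representation of g on h5 ⊕ a1 = span{E3,E31,E32,A3,A31,A32} obtained by restricting the adjoint action (i.e., {x ∈ g : [x,y] = 0 for all y ∈ h5 ⊕ a1}) is trivial. -/

import Mathlib

open Matrix

attribute [local instance 100] LieRing.ofAssociativeRing

abbrev M6 := Matrix (Fin 6) (Fin 6) ℝ

noncomputable def E1 : M6 := !![0,0,0,1,0,0; 0,0,0,0,0,0; 0,0,0,0,0,0; 0,0,0,0,0,0; 0,0,0,0,0,0; 0,0,0,0,0,0]
noncomputable def E2 : M6 := !![0,0,0,0,0,0; 0,0,0,0,1,0; 0,0,0,0,0,0; 0,0,0,0,0,0; 0,0,0,0,0,0; 0,0,0,0,0,0]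
noncomputable def E3 : M6 := !![0,0,0,0,0,0; 0,0,0,0,0,0; 0,0,0,0,0,1; 0,0,0,0,0,0; 0,0,0,0,0,0; 0,0,0,0,0,0]
noncomputable def E31 : M6 := !![0,0,0,0,0,1; 0,0,0,0,0,0; 0,0,0,1,0,0; 0,0,0,0,0,0; 0,0,0,0,0,0; 0,0,0,0,0,0]
noncomputable def E32 : M6 := !![0,0,0,0,0,0; 0,0,0,0,0,1; 0,0,0,0,1,0; 0,0,0,0,0,0; 0,0,0,0,0,0; 0,0,0,0,0,0]
noncomputable def A1 : M6 := !![(1/2),0,0,0,0,0; 0,0,0,0,0,0; 0,0,0,0,0,0; 0,0,0,(-1/2),0,0; 0,0,0,0,0,0; 0,0,0,0,0,0]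
noncomputable def A2 : M6 := !![0,0,0,0,0,0; 0,(1/2),0,0,0,0; 0,0,0,0,0,0; 0,0,0,0,0,0; 0,0,0,0,(-1/2),0; 0,0,0,0,0,0]
noncomputable def A3 : M6 := !![0,0,0,0,0,0; 0,0,0,0,0,0; 0,0,(1/2),0,0,0; 0,0,0,0,0,0; 0,0,0,0,0,0; 0,0,0,0,0,(-1/2)]
noncomputable def A31 : M6 := !![0,0,0,0,0,0; 0,0,0,0,0,0; 1,0,0,0,0,0; 0,0,0,0,0,-1; 0,0,0,0,0,0; 0,0,0,0,0,0]
noncomputable def A32 : M6 := !![0,0,0,0,0,0; 0,0,0,0,0,0; 0,1,0,0,0,0; 0,0,0,0,0,0; 0,0,0,0,0,-1; 0,0,0,0,0,0]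
noncomputable def W1 : M6 := !![0,0,0,-1,0,0; 0,0,0,0,0,0; 0,0,0,0,0,0; 1,0,0,0,0,0; 0,0,0,0,0,0; 0,0,0,0,0,0]
noncomputable def W2 : M6 := !![0,0,0,0,0,0; 0,0,0,0,-1,0; 0,0,0,0,0,0; 0,0,0,0,0,0; 0,1,0,0,0,0; 0,0,0,0,0,0]

noncomputable def gens : Set M6 := {E1, E2, E3, E31, E32, A1, A2, A3, A31, A32, W1, W2}

noncomputable def gLie : LieSubalgebra ℝ M6 := LieSubalgebra.lieSpan ℝ M6 gens

lemma memE1 : E1 ∈ gLie := LieSubalgebra.subset_lieSpan (by simp [gens])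
lemma memE2 : E2 ∈ gLie := LieSubalgebra.subset_lieSpan (by simp [gens])
lemma memE3 : E3 ∈ gLie := LieSubalgebra.subset_lieSpan (by simp [gens])
lemma memE31 : E31 ∈ gLie := LieSubalgebra.subset_lieSpan (by simp [gens])
lemma memE32 : E32 ∈ gLie := LieSubalgebra.subset_lieSpan (by simp [gens])
lemma memA1 : A1 ∈ gLie := LieSubalgebra.subset_lieSpan (by simp [gens])
lemma memA2 : A2 ∈ gLie := LieSubalgebra.subset_lieSpan (by simp [gens])
lemma memA3 : A3 ∈ gLie := LieSubalgebra.subset_lieSpan (by simp [gens])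
lemma memA31 : A31 ∈ gLie := LieSubalgebra.subset_lieSpan (by simp [gens])
lemma memA32 : A32 ∈ gLie := LieSubalgebra.subset_lieSpan (by simp [gens])
lemma memW1 : W1 ∈ gLie := LieSubalgebra.subset_lieSpan (by simp [gens])
lemma memW2 : W2 ∈ gLie := LieSubalgebra.subset_lieSpan (by simp [gens])

noncomputable abbrev gE1 : ↥gLie := ⟨E1, memE1⟩
noncomputable abbrev gE2 : ↥gLie := ⟨E2, memE2⟩
noncomputable abbrev gE3 : ↥gLie := ⟨E3, memE3⟩
noncomputable abbrev gE31 : ↥gLie := ⟨E31, memE31⟩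
noncomputable abbrev gE32 : ↥gLie := ⟨E32, memE32⟩
noncomputable abbrev gA1 : ↥gLie := ⟨A1, memA1⟩
noncomputable abbrev gA2 : ↥gLie := ⟨A2, memA2⟩
noncomputable abbrev gA3 : ↥gLie := ⟨A3, memA3⟩
noncomputable abbrev gA31 : ↥gLie := ⟨A31, memA31⟩
noncomputable abbrev gA32 : ↥gLie := ⟨A32, memA32⟩
noncomputable abbrev gW1 : ↥gLie := ⟨W1, memW1⟩
noncomputable abbrev gW2 : ↥gLie := ⟨W2, memW2⟩

/-! The six matrices spanning `h5 ⊕ a1` already have only the scalar matrices as centralizer in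
`gl 6`, and `g` consists of traceless matrices, so the only element of `g` commuting with
`h5 ⊕ a1` is the zero matrix. -/

theorem Matrix.smul_one_eq_zero_of_trace_eq_zero {n R : Type*} [Fintype n] [DecidableEq n]
    [Semiring R] [NoZeroDivisors R] [CharZero R] {c : R}
    (h : trace (c • 1 : Matrix n n R) = 0) : (c • 1 : Matrix n n R) = 0 := by
  rw [trace_smul, trace_one, smul_eq_mul, mul_eq_zero, Nat.cast_eq_zero,
    Fintype.card_eq_zero_iff] at h
  rcases h with rfl | h
  · exact zero_smul _ _
  · exact Subsingleton.elim _ _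

theorem gLie_le_sl : gLie ≤ LieAlgebra.SpecialLinear.sl (Fin 6) ℝ := by
  refine LieSubalgebra.lieSpan_le.mpr fun y hy => ?_
  simp only [gens, Set.mem_insert_iff, Set.mem_singleton_iff] at hy
  rcases hy with rfl | rfl | rfl | rfl | rfl | rfl | rfl | rfl | rfl | rfl | rfl | rfl <;>
    norm_num [LieAlgebra.SpecialLinear.sl, Matrix.trace, Fin.sum_univ_succ,
      E1, E2, E3, E31, E32, A1, A2, A3, A31, A32, W1, W2]

theorem eq_smul_one_of_mem_centralizer_h5_plus_a1 {x : M6}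
    (hx : x ∈ Set.centralizer ({E3, E31, E32, A3, A31, A32} : Set M6)) : x = x 0 0 • 1 := by
  simp only [Set.mem_centralizer_iff, Set.mem_insert_iff, Set.mem_singleton_iff,
    forall_eq_or_imp, forall_eq] at hx
  simp only [← Matrix.ext_iff, Fin.forall_fin_succ] at hx
  simp only [E3, Fin.isValue, Matrix.mul_apply, of_apply, cons_val', cons_val_fin_one,
    cons_val_zero, Fin.sum_univ_succ, zero_mul, cons_val_succ, Fin.succ_zero_eq_one,
    Fin.succ_one_eq_two, Fin.reduceSucc, Finset.univ_unique, Fin.default_eq_zero,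
    Finset.sum_const_zero, add_zero, mul_zero, cons_val_one, cons_val, mul_one, zero_add,
    IsEmpty.forall_iff, and_true, true_and, one_mul, Finset.sum_singleton, E31, E32, A3, one_div,
    zero_eq_mul, inv_eq_zero, OfNat.ofNat_ne_zero, or_false, div_eq_zero_iff, neg_eq_zero,
    one_ne_zero, or_self, mul_eq_zero, false_or, A31, mul_neg, zero_eq_neg, neg_mul,
    Finset.sum_neg_distrib, neg_inj, A32] at hx
  ext i j
  rw [Matrix.smul_apply, one_apply, smul_eq_mul]
  fin_cases i <;> fin_cases j <;> grind

theorem kernel_of_ad_on_h5_plus_a1_is_trivial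
    (x : M6) (hx : x ∈ gLie)
    (hker : ∀ y ∈ Submodule.span ℝ ({E3, E31, E32, A3, A31, A32} : Set M6),
      ⁅x, y⁆ = 0) :
    x = 0 := by
  have hcentral : x ∈ Set.centralizer ({E3, E31, E32, A3, A31, A32} : Set M6) := fun y hy =>
    (sub_eq_zero.mp <| (Ring.lie_def x y).symm.trans <| hker y (Submodule.subset_span hy)).symm
  have htrace : trace x = 0 := gLie_le_sl hx
  rw [eq_smul_one_of_mem_centralizer_h5_plus_a1 hcentral] at htrace ⊢
  exact Matrix.smul_one_eq_zero_of_trace_eq_zero htrace
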